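/- arXiv:2412.03767 — 5 statements merged into one kernel-verified Lean document; each statement's English description precedes it below -/
import Mathlib

section
/- For Λ_t = λI + Σ_{i=1}^t φ_i φ_iᵀ with λ > 0 and vectors φ_i ∈ ℝ^d, the sum Σ_{i=1}^t φ_iᵀ Λ_t^{-1} φ_i is at most d. -/
open Matrix

variable {n : Type*} [Fintype n]

theorem Matrix.sum_dotProduct_mulVec_eq_trace_mul_sum {R ι : Type*} [CommSemiring R] [Fintype ι]
    (M : Matrix n n R) (v : ι → n → R) :
    ∑ i, v i ⬝ᵥ M *ᵥ v i = (M * ∑ i, vecMulVec (v i) (v i)).trace := by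
  rw [Finset.mul_sum, trace_sum]
  refine Finset.sum_congr rfl fun i _ => ?_
  rw [mul_vecMulVec, trace_vecMulVec, dotProduct_comm]

theorem Matrix.PosSemidef.trace_inv_smul_one_add_mul_le_card [DecidableEq n]
    {S : Matrix n n ℝ} (hS : S.PosSemidef) {lam : ℝ} (hlam : 0 < lam) :
    ((lam • 1 + S)⁻¹ * S).trace ≤ Fintype.card n := by
  set Λ := lam • 1 + S
  have hΛ : Λ.PosDef := (PosDef.one.smul hlam).add_posSemidef hS
  have hSΛ : S = Λ - lam • 1 := by simp [Λ]
  calc (Λ⁻¹ * S).trace = Fintype.card n - lam * Λ⁻¹.trace := by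
        rw [hSΛ, Matrix.mul_sub, nonsing_inv_mul _ ((isUnit_iff_isUnit_det Λ).mp hΛ.isUnit), Matrix.mul_smul,
          Matrix.mul_one, trace_sub, trace_one, trace_smul, smul_eq_mul]
    _ ≤ Fintype.card n := sub_le_self _ (mul_nonneg hlam.le hΛ.inv.posSemidef.trace_nonneg)

theorem sum_quadratic_form_inv_le_dim_general
    (d t : ℕ) (lam : ℝ) (hlam : 0 < lam)
    (φ : Fin t → Fin d → ℝ)
    (Λ : Matrix (Fin d) (Fin d) ℝ)
    (hΛ : Λ = lam • (1 : Matrix (Fin d) (Fin d) ℝ) +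
      ∑ i : Fin t, vecMulVec (φ i) (φ i)) :
    ∑ i : Fin t, φ i ⬝ᵥ Λ⁻¹ *ᵥ φ i ≤ (d : ℝ) := by
  have hS : (∑ i, vecMulVec (φ i) (φ i)).PosSemidef :=
    posSemidef_sum _ fun i _ => by simpa using posSemidef_vecMulVec_self_star (φ i)
  rw [sum_dotProduct_mulVec_eq_trace_mul_sum, hΛ]
  simpa using hS.trace_inv_smul_one_add_mul_le_card hlam

/-- For `Λ_t = λ I + ∑ φ_i φ_iᵀ` with `λ > 0`, the sum
`∑ φ_iᵀ Λ_t⁻¹ φ_i` is at most `d`. -/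
theorem sum_quadratic_form_inv_le_dim
    (d t : ℕ) (hd : 1 ≤ d) (lam : ℝ) (hlam : 0 < lam)
    (φ : Fin t → Fin d → ℝ)
    (Λ : Matrix (Fin d) (Fin d) ℝ)
    (hΛ : Λ = lam • (1 : Matrix (Fin d) (Fin d) ℝ) +
      ∑ i : Fin t, vecMulVec (φ i) (φ i)) :
    ∑ i : Fin t, φ i ⬝ᵥ Λ⁻¹ *ᵥ φ i ≤ (d : ℝ) :=
  sum_quadratic_form_inv_le_dim_general d t lam hlam φ Λ hΛ
end

section
/- Let Λ_0 be a positive definite d×d matrix with smallest eigenvalue at least 1, and let φ_1,...,φ_t ∈ ℝ^d with ‖φ_j‖ ≤ 1 for all j. Define Λ_j = Λ_0 + Σ_{i=1}^j φ_i φ_iᵀ. Then log(det(Λ_t)/det(Λ_0)) ≤ Σ_{j=1}^t φ_jᵀ Λ_{j-1}^{-1} φ_j ≤ 2 log(det(Λ_t)/det(Λ_0)). -/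
/-!
Each rank-one update multiplies the determinant by `1 + x_j`, where `x_j = φ_jᵀ Λ_{j-1}⁻¹ φ_j`
(matrix determinant lemma), so `log (det Λ_t / det Λ_0) = ∑ log (1 + x_j)`. Since `Λ_{j-1} ≥ 1`
and `‖φ_j‖ ≤ 1` we have `0 ≤ x_j ≤ 1`, and on `[0, 1]` one has `x / 2 ≤ log (1 + x) ≤ x`.
-/

open Matrix Finset

lemma Real.le_two_mul_log_one_add {x : ℝ} (hx₀ : 0 ≤ x) (hx₂ : x ≤ 2) :
    x ≤ 2 * Real.log (1 + x) := by
  have h := Real.le_log_one_add_of_nonneg hx₀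
  rw [div_le_iff₀ (by linarith)] at h
  nlinarith

namespace Matrix

variable {n : Type*} [DecidableEq n]

theorem posDef_of_posSemidef_sub_one {A : Matrix n n ℝ} (hA : (A - 1).PosSemidef) : A.PosDef := by
  simpa using PosDef.posSemidef_add hA PosDef.one

variable [Fintype n]

theorem det_add_vecMulVec {α : Type*} [CommRing α] {A : Matrix n n α} (hA : IsUnit A.det)
    (u v : n → α) : (A + vecMulVec u v).det = A.det * (1 + v ⬝ᵥ A⁻¹ *ᵥ u) := by
  rw [vecMulVec_eq Unit, det_add_replicateCol_mul_replicateRow hA,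
    det_unique (1 + _), ← replicateRow_vecMul]
  simp [replicateRow_mul_replicateCol_apply, ← dotProduct_mulVec]

theorem dotProduct_inv_mulVec_le_dotProduct_self {A : Matrix n n ℝ} (hA : (A - 1).PosSemidef)
    (u : n → ℝ) : u ⬝ᵥ A⁻¹ *ᵥ u ≤ u ⬝ᵥ u := by
  set y := A⁻¹ *ᵥ u
  have hAy : A *ᵥ y = u := by
    rw [mulVec_mulVec, mul_nonsing_inv _ (posDef_of_posSemidef_sub_one hA).det_pos.ne'.isUnit,
      one_mulVec]
  -- `y ⬝ y ≤ y ⬝ A y = u ⬝ y` because `A ≥ 1`, and then `0 ≤ ‖u - y‖²` gives the claim.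
  have hyy : y ⬝ᵥ y ≤ u ⬝ᵥ y := by
    have h := hA.dotProduct_mulVec_nonneg y
    rw [star_trivial, sub_mulVec, one_mulVec, dotProduct_sub, hAy, dotProduct_comm y u] at h
    linarith
  have hsq : 0 ≤ (u - y) ⬝ᵥ (u - y) := dotProduct_self_star_nonneg (u - y)
  simp only [sub_dotProduct, dotProduct_sub, dotProduct_comm y u] at hsq
  linarith

end Matrix

section RankOneUpdates

variable {n : Type*} [Fintype n] [DecidableEq n] {A : ℕ → Matrix n n ℝ} {u : ℕ → n → ℝ}

theorem posSemidef_sub_one_of_rankOneUpdates (hA : ∀ j, A (j + 1) = A j + vecMulVec (u j) (u j))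
    (h₀ : (A 0 - 1).PosSemidef) (j : ℕ) : (A j - 1).PosSemidef := by
  induction j with
  | zero => exact h₀
  | succ j ih =>
    rw [hA, add_sub_right_comm]
    simpa using ih.add (posSemidef_vecMulVec_self_star (u j))

theorem det_eq_det_mul_prod_of_rankOneUpdates (hA : ∀ j, A (j + 1) = A j + vecMulVec (u j) (u j))
    (hdet : ∀ j, IsUnit (A j).det) (t : ℕ) :
    (A t).det = (A 0).det * ∏ j ∈ range t, (1 + u j ⬝ᵥ (A j)⁻¹ *ᵥ u j) := by
  induction t with
  | zero => simp
  | succ t ih => rw [prod_range_succ, ← mul_assoc, ← ih, hA, det_add_vecMulVec (hdet t)]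

end RankOneUpdates

theorem elliptical_potential_general
    (d t : ℕ) (Λ₀ : Matrix (Fin d) (Fin d) ℝ)
    (hmin : (Λ₀ - (1 : Matrix (Fin d) (Fin d) ℝ)).PosSemidef)
    (φ : ℕ → Fin d → ℝ)
    (hφ : ∀ j, Real.sqrt (∑ i, φ j i ^ 2) ≤ 1)
    (Λ : ℕ → Matrix (Fin d) (Fin d) ℝ)
    (hΛ : ∀ j, Λ j = Λ₀ + ∑ i ∈ Finset.range j, vecMulVec (φ i) (φ i)) :
    Real.log ((Λ t).det / Λ₀.det) ≤
        (∑ j ∈ Finset.range t, φ j ⬝ᵥ (Λ j)⁻¹ *ᵥ φ j) ∧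
      (∑ j ∈ Finset.range t, φ j ⬝ᵥ (Λ j)⁻¹ *ᵥ φ j) ≤
        2 * Real.log ((Λ t).det / Λ₀.det) := by
  have hΛ₀ : Λ 0 = Λ₀ := by simp [hΛ]
  have hstep : ∀ j, Λ (j + 1) = Λ j + vecMulVec (φ j) (φ j) := by
    simp [hΛ, sum_range_succ, add_assoc]
  have hge : ∀ j, (Λ j - 1).PosSemidef :=
    posSemidef_sub_one_of_rankOneUpdates hstep (hΛ₀ ▸ hmin)
  have hpd : ∀ j, (Λ j).PosDef := fun j => posDef_of_posSemidef_sub_one (hge j)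
  set x := fun j => φ j ⬝ᵥ (Λ j)⁻¹ *ᵥ φ j
  have hx₀ : ∀ j, 0 ≤ x j := fun j => by
    simpa using (hpd j).inv.posSemidef.dotProduct_mulVec_nonneg (φ j)
  have hx₁ : ∀ j, x j ≤ 1 := fun j =>
    (dotProduct_inv_mulVec_le_dotProduct_self (hge j) (φ j)).trans
      (by simpa [dotProduct, sq] using hφ j)
  have hlog : Real.log ((Λ t).det / Λ₀.det) = ∑ j ∈ range t, Real.log (1 + x j) := by
    rw [← hΛ₀, det_eq_det_mul_prod_of_rankOneUpdates hstep (fun j => (hpd j).det_pos.ne'.isUnit),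
      mul_div_cancel_left₀ _ (hpd 0).det_pos.ne', Real.log_prod fun j _ => by linarith [hx₀ j]]
  rw [hlog, mul_sum]
  exact ⟨sum_le_sum fun j _ => by
    simpa using Real.log_le_sub_one_of_pos (x := 1 + x j) (by linarith [hx₀ j]),
    sum_le_sum fun j _ => Real.le_two_mul_log_one_add (hx₀ j) (by linarith [hx₁ j])⟩

/-- Elliptical potential lemma: for `Λ_j = Λ_0 + ∑_{i≤j} φ_i φ_iᵀ` with
`λ_min(Λ_0) ≥ 1` and `‖φ_j‖ ≤ 1`,
`log (det Λ_t / det Λ_0) ≤ ∑_{j=1}^t φ_jᵀ Λ_{j-1}⁻¹ φ_j ≤ 2 log (det Λ_t / det Λ_0)`. -/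
theorem elliptical_potential
    (d t : ℕ) (Λ₀ : Matrix (Fin d) (Fin d) ℝ)
    (hΛ₀ : Λ₀.PosDef)
    (hmin : (Λ₀ - (1 : Matrix (Fin d) (Fin d) ℝ)).PosSemidef)
    (φ : ℕ → Fin d → ℝ)
    (hφ : ∀ j, Real.sqrt (∑ i, φ j i ^ 2) ≤ 1)
    (Λ : ℕ → Matrix (Fin d) (Fin d) ℝ)
    (hΛ : ∀ j, Λ j = Λ₀ + ∑ i ∈ Finset.range j, vecMulVec (φ i) (φ i)) :
    Real.log ((Λ t).det / Λ₀.det) ≤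
        (∑ j ∈ Finset.range t, φ j ⬝ᵥ (Λ j)⁻¹ *ᵥ φ j) ∧
      (∑ j ∈ Finset.range t, φ j ⬝ᵥ (Λ j)⁻¹ *ᵥ φ j) ≤
        2 * Real.log ((Λ t).det / Λ₀.det) :=
  elliptical_potential_general d t Λ₀ hmin φ hφ Λ hΛ
end

section
/- Let V₁ and V₂ be functions of the form V_i(s) = min{max_a (w_iᵀφ(s,a) + √(φ(s,a)ᵀ A_i φ(s,a))), H} where ‖φ(s,a)‖ ≤ 1 for all (s,a). Then sup_s |V₁(s) − V₂(s)| ≤ ‖w₁ − w₂‖ + √(‖A₁ − A₂‖_F). -/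
open Matrix

/-! The two value functions differ by at most the largest difference of their action values, because
`min · H` and a maximum over actions are `1`-Lipschitz. For a feature vector `x` with `‖x‖ ≤ 1`, the
linear parts differ by at most `‖w₁ - w₂‖` (Cauchy–Schwarz), and the bonuses differ by at most
`√|xᵀ(A₁ - A₂)x| ≤ √‖A₁ - A₂‖_F`, since `|√a - √b| ≤ √|a - b|` and `‖(A₁ - A₂)x‖ ≤ ‖A₁ - A₂‖_F ‖x‖`. -/

theorem abs_min_sub_min_le_abs {α : Type*} [AddCommGroup α] [LinearOrder α] [IsOrderedAddMonoid α]
    (a b c : α) : |min a c - min b c| ≤ |a - b| := by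
  simpa only [sub_self, abs_zero, max_eq_left (abs_nonneg (a - b))]
    using abs_min_sub_min_le_max a c b c

namespace Finset

variable {ι α : Type*} [AddCommGroup α] [LinearOrder α] [IsOrderedAddMonoid α]
  {s : Finset ι} (hs : s.Nonempty) {f g : ι → α} {c : α}

theorem sup'_le_sup'_add (h : ∀ i ∈ s, f i ≤ g i + c) : s.sup' hs f ≤ s.sup' hs g + c :=
  sup'_le hs f fun i hi => (h i hi).trans (add_le_add_left (le_sup' g hi) c)

theorem abs_sup'_sub_sup'_le (h : ∀ i ∈ s, |f i - g i| ≤ c) :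
    |s.sup' hs f - s.sup' hs g| ≤ c := by
  refine abs_sub_le_iff.2 ⟨sub_le_iff_le_add'.2 ?_, sub_le_iff_le_add'.2 ?_⟩
  · exact sup'_le_sup'_add hs fun i hi => sub_le_iff_le_add'.1 (abs_sub_le_iff.1 (h i hi)).1
  · exact sup'_le_sup'_add hs fun i hi => sub_le_iff_le_add'.1 (abs_sub_le_iff.1 (h i hi)).2

end Finset

theorem Real.abs_sqrt_sub_sqrt_le_sqrt_abs_sub {x y : ℝ} (hx : 0 ≤ x) (hy : 0 ≤ y) :
    |√x - √y| ≤ √|x - y| := by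
  refine Real.abs_le_sqrt ?_
  have hsum : |√x - √y| ≤ √x + √y :=
    abs_sub_le_iff.2 ⟨by linarith [Real.sqrt_nonneg y], by linarith [Real.sqrt_nonneg x]⟩
  calc (√x - √y) ^ 2 = |√x - √y| * |√x - √y| := by rw [abs_mul_abs_self, sq]
    _ ≤ |√x - √y| * (√x + √y) := mul_le_mul_of_nonneg_left hsum (abs_nonneg _)
    _ = |(√x - √y) * (√x + √y)| := by
      rw [abs_mul, abs_of_nonneg (add_nonneg (Real.sqrt_nonneg x) (Real.sqrt_nonneg y))]
    _ = |x - y| := by rw [mul_comm, ← sq_sub_sq, Real.sq_sqrt hx, Real.sq_sqrt hy]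

namespace Matrix

variable {ι : Type*} [Fintype ι]

theorem abs_dotProduct_le (v x : ι → ℝ) :
    |v ⬝ᵥ x| ≤ √(∑ i, v i ^ 2) * √(∑ i, x i ^ 2) := by
  rw [← Real.sqrt_mul (Finset.sum_nonneg fun i _ => sq_nonneg (v i))]
  exact Real.abs_le_sqrt (Finset.sum_mul_sq_le_sq_mul_sq _ _ _)

theorem sum_mulVec_sq_le (B : Matrix ι ι ℝ) (x : ι → ℝ) :
    ∑ i, (B *ᵥ x) i ^ 2 ≤ (∑ i, ∑ j, B i j ^ 2) * ∑ i, x i ^ 2 := by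
  rw [Finset.sum_mul]
  gcongr with i
  exact Finset.sum_mul_sq_le_sq_mul_sq _ _ _

theorem abs_dotProduct_mulVec_le (B : Matrix ι ι ℝ) (x : ι → ℝ) :
    |x ⬝ᵥ B *ᵥ x| ≤ √(∑ i, ∑ j, B i j ^ 2) * ∑ i, x i ^ 2 := by
  have hx : √(∑ i, x i ^ 2) * √(∑ i, x i ^ 2) = ∑ i, x i ^ 2 :=
    Real.mul_self_sqrt (Finset.sum_nonneg fun i _ => sq_nonneg (x i))
  calc |x ⬝ᵥ B *ᵥ x| ≤ √(∑ i, x i ^ 2) * √(∑ i, (B *ᵥ x) i ^ 2) := abs_dotProduct_le _ _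
    _ ≤ √(∑ i, x i ^ 2) * √((∑ i, ∑ j, B i j ^ 2) * ∑ i, x i ^ 2) := by
      gcongr
      exact sum_mulVec_sq_le B x
    _ = √(∑ i, ∑ j, B i j ^ 2) * ∑ i, x i ^ 2 := by
      rw [Real.sqrt_mul (by positivity), mul_left_comm, hx]

variable {x : ι → ℝ}

theorem abs_dotProduct_sub_dotProduct_le (hx : ∑ i, x i ^ 2 ≤ 1) (w₁ w₂ : ι → ℝ) :
    |w₁ ⬝ᵥ x - w₂ ⬝ᵥ x| ≤ √(∑ i, (w₁ i - w₂ i) ^ 2) := by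
  rw [← sub_dotProduct]
  refine (abs_dotProduct_le _ _).trans (mul_le_of_le_one_right (Real.sqrt_nonneg _) ?_)
  exact Real.sqrt_le_one.2 hx

theorem abs_sqrt_quadForm_sub_le (hx : ∑ i, x i ^ 2 ≤ 1) {A₁ A₂ : Matrix ι ι ℝ}
    (hA₁ : A₁.PosSemidef) (hA₂ : A₂.PosSemidef) :
    |√(x ⬝ᵥ A₁ *ᵥ x) - √(x ⬝ᵥ A₂ *ᵥ x)| ≤ √(√(∑ i, ∑ j, (A₁ i j - A₂ i j) ^ 2)) := by
  refine (Real.abs_sqrt_sub_sqrt_le_sqrt_abs_sub (hA₁.dotProduct_mulVec_nonneg x)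
    (hA₂.dotProduct_mulVec_nonneg x)).trans (Real.sqrt_le_sqrt ?_)
  rw [← dotProduct_sub, ← sub_mulVec]
  exact (abs_dotProduct_mulVec_le _ x).trans (mul_le_of_le_one_right (Real.sqrt_nonneg _) hx)

theorem abs_optimisticActionValue_sub_le (hx : ∑ i, x i ^ 2 ≤ 1) (w₁ w₂ : ι → ℝ) {A₁ A₂ : Matrix ι ι ℝ}
    (hA₁ : A₁.PosSemidef) (hA₂ : A₂.PosSemidef) :
    |(w₁ ⬝ᵥ x + √(x ⬝ᵥ A₁ *ᵥ x)) - (w₂ ⬝ᵥ x + √(x ⬝ᵥ A₂ *ᵥ x))| ≤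
      √(∑ i, (w₁ i - w₂ i) ^ 2) + √(√(∑ i, ∑ j, (A₁ i j - A₂ i j) ^ 2)) := by
  rw [add_sub_add_comm]
  exact (abs_add_le _ _).trans (add_le_add (abs_dotProduct_sub_dotProduct_le hx w₁ w₂)
    (abs_sqrt_quadForm_sub_le hx hA₁ hA₂))

end Matrix

theorem optimistic_value_dist_bound_general
    {S A : Type*} [Fintype A] [Nonempty A] (d : ℕ)
    (φ : S → A → Fin d → ℝ)
    (hφ : ∀ s a, Real.sqrt (∑ i, φ s a i ^ 2) ≤ 1)
    (H : ℝ)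
    (w₁ w₂ : Fin d → ℝ) (A₁ A₂ : Matrix (Fin d) (Fin d) ℝ)
    (hA₁ : A₁.PosSemidef) (hA₂ : A₂.PosSemidef)
    (V₁ V₂ : S → ℝ)
    (hV₁ : ∀ s, V₁ s = min
      (Finset.univ.sup' Finset.univ_nonempty
        (fun a : A => w₁ ⬝ᵥ φ s a + Real.sqrt (φ s a ⬝ᵥ A₁ *ᵥ φ s a))) H)
    (hV₂ : ∀ s, V₂ s = min
      (Finset.univ.sup' Finset.univ_nonempty
        (fun a : A => w₂ ⬝ᵥ φ s a + Real.sqrt (φ s a ⬝ᵥ A₂ *ᵥ φ s a))) H) :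
    ∀ s, |V₁ s - V₂ s| ≤
      Real.sqrt (∑ i, (w₁ i - w₂ i) ^ 2) +
        Real.sqrt (Real.sqrt (∑ i, ∑ j, (A₁ i j - A₂ i j) ^ 2)) := by
  intro s
  rw [hV₁ s, hV₂ s]
  refine (abs_min_sub_min_le_abs _ _ H).trans (Finset.abs_sup'_sub_sup'_le _ fun a _ => ?_)
  exact abs_optimisticActionValue_sub_le (Real.sqrt_le_one.1 (hφ s a)) w₁ w₂ hA₁ hA₂

/-- Distance bound for optimistic value functions: if
`V_i(s) = min (max_a (w_iᵀφ(s,a) + √(φ(s,a)ᵀ A_i φ(s,a)))) H` with `‖φ(s,a)‖ ≤ 1`,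
then `|V₁ s − V₂ s| ≤ ‖w₁ − w₂‖ + √‖A₁ − A₂‖_F` for every `s`. -/
theorem optimistic_value_dist_bound
    {S A : Type*} [Fintype A] [Nonempty A] (d : ℕ)
    (φ : S → A → Fin d → ℝ)
    (hφ : ∀ s a, Real.sqrt (∑ i, φ s a i ^ 2) ≤ 1)
    (H : ℝ) (hH : 0 < H)
    (w₁ w₂ : Fin d → ℝ) (A₁ A₂ : Matrix (Fin d) (Fin d) ℝ)
    (hA₁ : A₁.PosSemidef) (hA₂ : A₂.PosSemidef)
    (V₁ V₂ : S → ℝ)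
    (hV₁ : ∀ s, V₁ s = min
      (Finset.univ.sup' Finset.univ_nonempty
        (fun a : A => w₁ ⬝ᵥ φ s a + Real.sqrt (φ s a ⬝ᵥ A₁ *ᵥ φ s a))) H)
    (hV₂ : ∀ s, V₂ s = min
      (Finset.univ.sup' Finset.univ_nonempty
        (fun a : A => w₂ ⬝ᵥ φ s a + Real.sqrt (φ s a ⬝ᵥ A₂ *ᵥ φ s a))) H) :
    ∀ s, |V₁ s - V₂ s| ≤
      Real.sqrt (∑ i, (w₁ i - w₂ i) ^ 2) +
        Real.sqrt (Real.sqrt (∑ i, ∑ j, (A₁ i j - A₂ i j) ^ 2)) :=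
  optimistic_value_dist_bound_general d φ hφ H w₁ w₂ A₁ A₂ hA₁ hA₂ V₁ V₂ hV₁ hV₂
end

section
/- Suppose w ∈ ℝ^d satisfies w = Λ^{-1} Σ_{τ=1}^{k-1} φ_τ y_τ, where Λ = λI + Σ_{τ=1}^{k-1} φ_τ φ_τᵀ, ‖φ_τ‖ ≤ 1, and |y_τ| ≤ 2H for all τ. Then ‖w‖ ≤ 2H√(dk/λ). -/
/-!
Pairing `Λ w = ∑ y_τ φ_τ` with `w` gives
`λ‖w‖² + ∑ (φ_τ ⬝ w)² = ∑ y_τ (φ_τ ⬝ w) ≤ ∑ ((φ_τ ⬝ w)² + y_τ² / 4)`,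
so `λ‖w‖² ≤ ∑ y_τ² / 4 ≤ (k - 1) H² ≤ d k H²` once `d ≥ 1`
(for `d = 0`, `w = 0`).
-/

open Matrix

section RegularizedGram

variable {n ι : Type*} [Fintype n] [DecidableEq n]

def regularizedGram (lam : ℝ) (s : Finset ι) (φ : ι → n → ℝ) : Matrix n n ℝ :=
  lam • 1 + ∑ τ ∈ s, vecMulVec (φ τ) (φ τ)

variable {lam : ℝ} {s : Finset ι} {φ : ι → n → ℝ}

theorem dotProduct_regularizedGram_mulVec (x : n → ℝ) :
    x ⬝ᵥ (regularizedGram lam s φ *ᵥ x) =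
      lam * (x ⬝ᵥ x) + ∑ τ ∈ s, (φ τ ⬝ᵥ x) ^ 2 := by
  simp only [regularizedGram, add_mulVec, smul_mulVec, one_mulVec, sum_mulVec,
    vecMulVec_mulVec, dotProduct_add, dotProduct_smul, dotProduct_sum, smul_eq_mul]
  congr 1
  refine Finset.sum_congr rfl fun τ _ => ?_
  simp [dotProduct_comm x, sq]

theorem posDef_regularizedGram (hlam : 0 < lam) : (regularizedGram lam s φ).PosDef :=
  ((PosDef.one).smul hlam).add_posSemidef <|
    posSemidef_sum s fun τ _ => by simpa using posSemidef_vecMulVec_self_star (φ τ)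

theorem mul_dotProduct_self_le_of_regularizedGram_mulVec_eq {w : n → ℝ} {y : ι → ℝ}
    (hw : regularizedGram lam s φ *ᵥ w = ∑ τ ∈ s, y τ • φ τ) :
    lam * (w ⬝ᵥ w) ≤ (∑ τ ∈ s, y τ ^ 2) / 4 := by
  have hquad := dotProduct_regularizedGram_mulVec (lam := lam) (s := s) (φ := φ) w
  rw [hw, dotProduct_sum] at hquad
  have hamgm : ∀ τ ∈ s, w ⬝ᵥ (y τ • φ τ) ≤ (φ τ ⬝ᵥ w) ^ 2 + y τ ^ 2 / 4 := by
    intro τ _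
    rw [dotProduct_smul, smul_eq_mul, dotProduct_comm]
    nlinarith [sq_nonneg (φ τ ⬝ᵥ w - y τ / 2)]
  have := Finset.sum_le_sum hamgm
  rw [Finset.sum_add_distrib, ← Finset.sum_div] at this
  linarith

end RegularizedGram

theorem weight_norm_bound_general
    (d k : ℕ) (lam H : ℝ) (hlam : 0 < lam)
    (φ : ℕ → Fin d → ℝ)
    (y : ℕ → ℝ) (hy : ∀ τ, |y τ| ≤ 2 * H)
    (Λ : Matrix (Fin d) (Fin d) ℝ)
    (hΛ : Λ = lam • (1 : Matrix (Fin d) (Fin d) ℝ) +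
      ∑ τ ∈ Finset.range (k - 1), vecMulVec (φ τ) (φ τ))
    (w : Fin d → ℝ)
    (hw : w = Λ⁻¹ *ᵥ (∑ τ ∈ Finset.range (k - 1), y τ • φ τ)) :
    Real.sqrt (∑ i, w i ^ 2) ≤ 2 * H * Real.sqrt (d * k / lam) := by
  rcases Nat.eq_zero_or_pos d with rfl | hd
  · simp
  replace hΛ : Λ = regularizedGram lam (Finset.range (k - 1)) φ := hΛ
  subst hΛ
  have hΛw : regularizedGram lam (Finset.range (k - 1)) φ *ᵥ w =
      ∑ τ ∈ Finset.range (k - 1), y τ • φ τ := by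
    rw [hw, mulVec_mulVec, mul_nonsing_inv _ (posDef_regularizedGram hlam).det_pos.ne'.isUnit,
      one_mulVec]
  have hridge := mul_dotProduct_self_le_of_regularizedGram_mulVec_eq hΛw
  have hH : 0 ≤ H := by linarith [abs_nonneg (y 0), hy 0]
  have hy2 : ∑ τ ∈ Finset.range (k - 1), y τ ^ 2 ≤ (k - 1 : ℕ) * (2 * H) ^ 2 := by
    simpa using Finset.sum_le_card_nsmul (Finset.range (k - 1)) _ _ fun τ _ =>
      sq_le_sq' (neg_le_of_abs_le (hy τ)) (le_of_abs_le (hy τ))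
  have hk : ((k - 1 : ℕ) : ℝ) ≤ d * k := by
    exact_mod_cast (Nat.sub_le k 1).trans (Nat.le_mul_of_pos_left k hd)
  have hnorm : ∑ i, w i ^ 2 ≤ (2 * H) ^ 2 * (d * k / lam) := by
    have hdot : w ⬝ᵥ w = ∑ i, w i ^ 2 := by simp only [dotProduct, sq]
    rw [← hdot, mul_div_assoc', le_div_iff₀ hlam]
    nlinarith
  calc Real.sqrt (∑ i, w i ^ 2) ≤ Real.sqrt ((2 * H) ^ 2 * (d * k / lam)) :=
        Real.sqrt_le_sqrt hnorm
    _ = 2 * H * Real.sqrt (d * k / lam) := by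
        rw [Real.sqrt_mul (by positivity), Real.sqrt_sq (by positivity)]

/-- If `w = Λ⁻¹ ∑_{τ<k-1} φ_τ y_τ` with `Λ = λ I + ∑ φ_τ φ_τᵀ`, `‖φ_τ‖ ≤ 1`
and `|y_τ| ≤ 2H`, then `‖w‖ ≤ 2H √(dk/λ)`. -/
theorem weight_norm_bound
    (d k : ℕ) (hk : 1 ≤ k) (lam H : ℝ) (hlam : 0 < lam) (hH : 0 < H)
    (φ : ℕ → Fin d → ℝ) (hφ : ∀ τ, Real.sqrt (∑ i, φ τ i ^ 2) ≤ 1)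
    (y : ℕ → ℝ) (hy : ∀ τ, |y τ| ≤ 2 * H)
    (Λ : Matrix (Fin d) (Fin d) ℝ)
    (hΛ : Λ = lam • (1 : Matrix (Fin d) (Fin d) ℝ) +
      ∑ τ ∈ Finset.range (k - 1), vecMulVec (φ τ) (φ τ))
    (w : Fin d → ℝ)
    (hw : w = Λ⁻¹ *ᵥ (∑ τ ∈ Finset.range (k - 1), y τ • φ τ)) :
    Real.sqrt (∑ i, w i ^ 2) ≤ 2 * H * Real.sqrt (d * k / lam) :=
  weight_norm_bound_general d k lam H hlam φ y hy Λ hΛ w hw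
end

section
/- Let V be the class of functions S → ℝ of the form V(s) = min{max_a (wᵀφ(s,a) + √(φ(s,a)ᵀAφ(s,a))), H} with ‖w‖ ≤ L and ‖A‖_F ≤ d^{1/2}B²/λ, where ‖φ(s,a)‖ ≤ 1 for all (s,a). Then the log ε-covering number of V in the sup distance satisfies log N_ε ≤ d log(1 + 4L/ε) + d² log(1 + 8d^{1/2}B²/(λε²)). -/
/-!
The class is the image of the parameter set `{‖w‖ ≤ L} × {‖M‖_F ≤ √d B² / λ}` under
`(w, M) ↦ V_{w,M}`, and this map is controlled in sup distance by `‖w - w'‖ + √‖M - M'‖_F`: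
for `‖x‖ ≤ 1`, Cauchy–Schwarz gives `|(w - w') ⬝ x| ≤ ‖w - w'‖` and
`|x ⬝ (M - M') x| ≤ ‖M - M'‖_F`, while `|√a - √b| ≤ √|a - b|`, and neither the maximum over
actions nor the truncation at `H` increases the distance. So an `ε/2`-net of the `w`-ball and an
`ε²/4`-net of the Frobenius ball give an `ε`-net of the class. A maximal `δ`-separated subset of
a ball of radius `R` in an `n`-dimensional space is a `δ`-net, and comparing volumes of the
disjoint balls of radius `δ/2` around its points with the ball of radius `R + δ/2` bounds its
size by `(1 + 2R/δ)ⁿ`.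
-/

open Matrix Metric MeasureTheory Module
open scoped NNReal ENNReal

section BallCover

variable {E : Type*} [NormedAddCommGroup E] [NormedSpace ℝ E] [FiniteDimensional ℝ E]

theorem card_le_of_isSeparated_of_subset_closedBall {T : Finset E} {x : E} {R : ℝ} {δ : ℝ≥0}
    (hR : 0 ≤ R) (hδ : 0 < δ) (hTR : (T : Set E) ⊆ closedBall x R)
    (hT : IsSeparated δ (T : Set E)) :
    (T.card : ℝ) ≤ (1 + 2 * R / δ) ^ finrank ℝ E := by
  borelize E
  let μ : Measure E := Measure.addHaar
  have hδ2 : (0 : ℝ) < δ / 2 := by positivity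
  have vol_ball (y : E) {r : ℝ} (hr : 0 < r) :
      μ.real (ball y r) = r ^ finrank ℝ E * μ.real (ball 0 1) := by
    simp [measureReal_def, Measure.addHaar_ball_of_pos μ y hr, ENNReal.toReal_ofReal, hr.le]
  have hdisj : (T : Set E).PairwiseDisjoint fun y => ball y (δ / 2) := by
    intro y hy z hz hyz
    refine ball_disjoint_ball ?_
    have hδyz : (δ : ℝ≥0∞) < edist y z := hT hy hz hyz
    rw [edist_nndist, ENNReal.coe_lt_coe, ← NNReal.coe_lt_coe, coe_nndist] at hδyz
    linarith
  have hsub : (⋃ y ∈ T, ball y (δ / 2)) ⊆ ball x (R + δ / 2) :=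
    Set.iUnion₂_subset fun y hy => ball_subset_ball' (by linarith [mem_closedBall.1 (hTR hy)])
  have hvol : (T.card : ℝ) * (δ / 2) ^ finrank ℝ E * μ.real (ball 0 1) ≤
      (R + δ / 2) ^ finrank ℝ E * μ.real (ball 0 1) := by
    calc (T.card : ℝ) * (δ / 2) ^ finrank ℝ E * μ.real (ball 0 1)
        = μ.real (⋃ y ∈ T, ball y (δ / 2)) := by
          rw [mul_assoc, measureReal_biUnion_finset hdisj fun _ _ => measurableSet_ball]
          simp [vol_ball _ hδ2]
      _ ≤ μ.real (ball x (R + δ / 2)) := measureReal_mono hsub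
      _ = _ := vol_ball x (by positivity)
  have hc : 0 < μ.real (ball (0 : E) 1) :=
    ENNReal.toReal_pos (measure_ball_pos μ 0 one_pos).ne' measure_ball_lt_top.ne
  have hratio : 1 + 2 * R / δ = (R + δ / 2) / (δ / 2) := by field_simp; ring
  rw [hratio, div_pow, le_div_iff₀ (by positivity)]
  exact le_of_mul_le_mul_right hvol hc

theorem packingNumber_closedBall_le {x : E} {R : ℝ} {δ : ℝ≥0} (hR : 0 ≤ R) (hδ : 0 < δ) :
    packingNumber δ (closedBall x R) ≤ ⌊(1 + 2 * R / δ) ^ finrank ℝ E⌋₊ := by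
  refine iSup₂_le fun C hCR => iSup_le fun hC => ?_
  by_contra! hlt
  obtain ⟨T, hTC, hTcard⟩ := Set.exists_subset_encard_eq (Order.add_one_le_of_lt hlt)
  have hT : T.Finite := Set.finite_of_encard_eq_coe hTcard
  have hcard := card_le_of_isSeparated_of_subset_closedBall hR hδ
    (by rw [hT.coe_toFinset]; exact hTC.trans hCR) (by rw [hT.coe_toFinset]; exact hC.subset hTC)
  rw [hT.encard_eq_coe_toFinset_card] at hTcard
  rw [show hT.toFinset.card = _ from mod_cast hTcard] at hcard
  exact (Nat.lt_floor_add_one _).not_ge (mod_cast hcard)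

theorem exists_finset_isCover_closedBall (x : E) {R : ℝ} {δ : ℝ≥0} (hR : 0 ≤ R) (hδ : 0 < δ) :
    ∃ T : Finset E, IsCover δ (closedBall x R) T ∧
      (T.card : ℝ) ≤ (1 + 2 * R / δ) ^ finrank ℝ E := by
  have hfin : packingNumber δ (closedBall x R) ≠ ⊤ :=
    ne_top_of_le_ne_top (ENat.natCast_ne_top _) (packingNumber_closedBall_le hR hδ)
  have hC : (maximalSeparatedSet δ (closedBall x R)).Finite := by
    rw [← Set.encard_ne_top_iff, encard_maximalSeparatedSet hfin]; exact hfin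
  refine ⟨hC.toFinset, by simpa using isCover_maximalSeparatedSet hfin, ?_⟩
  exact card_le_of_isSeparated_of_subset_closedBall hR hδ
    (by simpa using maximalSeparatedSet_subset) (by simpa using isSeparated_maximalSeparatedSet)

theorem exists_finset_dist_le_of_mem_closedBall (x : E) {R δ : ℝ} (hR : 0 ≤ R) (hδ : 0 < δ) :
    ∃ T : Finset E, (∀ y ∈ closedBall x R, ∃ z ∈ T, dist y z ≤ δ) ∧
      (T.card : ℝ) ≤ (1 + 2 * R / δ) ^ finrank ℝ E := by
  lift δ to ℝ≥0 using hδ.le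
  obtain ⟨T, hT, hTcard⟩ := exists_finset_isCover_closedBall x hR (mod_cast hδ)
  refine ⟨T, fun y hy => ?_, hTcard⟩
  simpa [dist_comm] using isCover_iff_subset_iUnion_closedBall.1 hT hy

end BallCover

open scoped Matrix.Norms.Frobenius

section Euclidean
variable {m n : Type*} [Fintype m] [Fintype n]

theorem EuclideanSpace.norm_toLp_eq_sqrt_sum_sq (x : n → ℝ) :
    ‖WithLp.toLp 2 x‖ = √(∑ i, x i ^ 2) := by
  simp [EuclideanSpace.norm_eq]

theorem Matrix.frobenius_norm_eq_sqrt_sum_sq (M : Matrix m n ℝ) :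
    ‖M‖ = √(∑ i, ∑ j, M i j ^ 2) := by
  simp [frobenius_norm_def, Real.sqrt_eq_rpow]

theorem abs_dotProduct_le (x y : n → ℝ) : |x ⬝ᵥ y| ≤ ‖WithLp.toLp 2 x‖ * ‖WithLp.toLp 2 y‖ := by
  simpa [EuclideanSpace.inner_toLp_toLp, dotProduct_comm] using
    abs_real_inner_le_norm (WithLp.toLp 2 x) (WithLp.toLp 2 y)

theorem Matrix.norm_toLp_mulVec_le (M : Matrix m n ℝ) (x : n → ℝ) :
    ‖WithLp.toLp 2 (M *ᵥ x)‖ ≤ ‖M‖ * ‖WithLp.toLp 2 x‖ := by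
  rw [← frobenius_norm_replicateCol (ι := Unit), replicateCol_mulVec,
    ← frobenius_norm_replicateCol (ι := Unit) x]
  exact frobenius_norm_mul M _

theorem abs_dotProduct_mulVec_le (M : Matrix n n ℝ) (x : n → ℝ) :
    |x ⬝ᵥ M *ᵥ x| ≤ ‖M‖ * ‖WithLp.toLp 2 x‖ ^ 2 :=
  calc |x ⬝ᵥ M *ᵥ x| ≤ ‖WithLp.toLp 2 x‖ * ‖WithLp.toLp 2 (M *ᵥ x)‖ := abs_dotProduct_le _ _
    _ ≤ ‖WithLp.toLp 2 x‖ * (‖M‖ * ‖WithLp.toLp 2 x‖) := by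
      gcongr; exact M.norm_toLp_mulVec_le x
    _ = ‖M‖ * ‖WithLp.toLp 2 x‖ ^ 2 := by ring

end Euclidean

theorem Real.abs_sqrt_sub_sqrt_le (a b : ℝ) : |√a - √b| ≤ √|a - b| := by
  wlog h : b ≤ a generalizing a b
  · rw [abs_sub_comm, abs_sub_comm a]; exact this b a (le_of_not_ge h)
  rw [abs_of_nonneg (sub_nonneg.2 (Real.sqrt_le_sqrt h)), abs_of_nonneg (sub_nonneg.2 h),
    sub_le_iff_le_add, Real.sqrt_le_left (by positivity)]
  nlinarith [Real.sq_sqrt (sub_nonneg.2 h), Real.sq_sqrt' (x := b), le_max_left b 0,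
    mul_nonneg (Real.sqrt_nonneg (a - b)) (Real.sqrt_nonneg b)]

theorem Finset.abs_sup'_sub_sup'_le_s18 {ι α : Type*} [AddCommGroup α] [LinearOrder α]
    [IsOrderedAddMonoid α] {s : Finset ι} (hs : s.Nonempty) {f g : ι → α} {c : α}
    (h : ∀ i ∈ s, |f i - g i| ≤ c) : |s.sup' hs f - s.sup' hs g| ≤ c := by
  rw [abs_sub_le_iff, sub_le_iff_le_add, sub_le_iff_le_add]
  constructor <;> refine Finset.sup'_le _ _ fun i hi => ?_
  · exact (sub_le_iff_le_add.1 (abs_sub_le_iff.1 (h i hi)).1).trans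
      (add_le_add_right (le_sup' g hi) c)
  · exact (sub_le_iff_le_add.1 (abs_sub_le_iff.1 (h i hi)).2).trans
      (add_le_add_right (le_sup' f hi) c)

section OptimisticValue

variable {S A ι : Type*} [Fintype A] [Nonempty A] [Fintype ι]

noncomputable def optimisticQ (w x : ι → ℝ) (M : Matrix ι ι ℝ) : ℝ :=
  w ⬝ᵥ x + √(x ⬝ᵥ M *ᵥ x)

noncomputable def optimisticValue (φ : S → A → ι → ℝ) (H : ℝ) (w : ι → ℝ)
    (M : Matrix ι ι ℝ) (s : S) : ℝ :=
  min (Finset.univ.sup' Finset.univ_nonempty fun a => optimisticQ w (φ s a) M) H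

theorem abs_optimisticQ_sub_le {w w' x : ι → ℝ} {M M' : Matrix ι ι ℝ}
    (hx : ‖WithLp.toLp 2 x‖ ≤ 1) :
    |optimisticQ w x M - optimisticQ w' x M'| ≤ ‖WithLp.toLp 2 (w - w')‖ + √‖M - M'‖ := by
  have hlin : |w ⬝ᵥ x - w' ⬝ᵥ x| ≤ ‖WithLp.toLp 2 (w - w')‖ :=
    calc |w ⬝ᵥ x - w' ⬝ᵥ x| = |(w - w') ⬝ᵥ x| := by rw [sub_dotProduct]
      _ ≤ ‖WithLp.toLp 2 (w - w')‖ * ‖WithLp.toLp 2 x‖ := abs_dotProduct_le _ _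
      _ ≤ ‖WithLp.toLp 2 (w - w')‖ := mul_le_of_le_one_right (norm_nonneg _) hx
  have hbonus : |√(x ⬝ᵥ M *ᵥ x) - √(x ⬝ᵥ M' *ᵥ x)| ≤ √‖M - M'‖ :=
    calc |√(x ⬝ᵥ M *ᵥ x) - √(x ⬝ᵥ M' *ᵥ x)| ≤ √|x ⬝ᵥ M *ᵥ x - x ⬝ᵥ M' *ᵥ x| :=
          Real.abs_sqrt_sub_sqrt_le _ _
      _ = √|x ⬝ᵥ (M - M') *ᵥ x| := by rw [sub_mulVec, dotProduct_sub]
      _ ≤ √(‖M - M'‖ * ‖WithLp.toLp 2 x‖ ^ 2) :=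
          Real.sqrt_le_sqrt (abs_dotProduct_mulVec_le _ _)
      _ ≤ √‖M - M'‖ := Real.sqrt_le_sqrt <| mul_le_of_le_one_right (norm_nonneg _) <|
          pow_le_one₀ (norm_nonneg _) hx
  calc |optimisticQ w x M - optimisticQ w' x M'|
      = |(w ⬝ᵥ x - w' ⬝ᵥ x) + (√(x ⬝ᵥ M *ᵥ x) - √(x ⬝ᵥ M' *ᵥ x))| := by
        rw [optimisticQ, optimisticQ, add_sub_add_comm]
    _ ≤ _ := (abs_add_le _ _).trans (add_le_add hlin hbonus)

theorem abs_optimisticValue_sub_le {φ : S → A → ι → ℝ}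
    (hφ : ∀ s a, ‖WithLp.toLp 2 (φ s a)‖ ≤ 1) (H : ℝ) (w w' : ι → ℝ) (M M' : Matrix ι ι ℝ) (s : S) :
    |optimisticValue φ H w M s - optimisticValue φ H w' M' s| ≤
      ‖WithLp.toLp 2 (w - w')‖ + √‖M - M'‖ := by
  refine (abs_min_sub_min_le_max _ _ _ _).trans (max_le ?_ (by simp; positivity))
  exact Finset.abs_sup'_sub_sup'_le_s18 _ fun a _ => abs_optimisticQ_sub_le (hφ s a)

theorem exists_finset_cover_optimisticValue {φ : S → A → ι → ℝ}
    (hφ : ∀ s a, ‖WithLp.toLp 2 (φ s a)‖ ≤ 1) (H : ℝ) {L R ε : ℝ} (hL : 0 ≤ L) (hR : 0 ≤ R)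
    (hε : 0 < ε) :
    ∃ T : Finset (S → ℝ),
      (∀ (w : ι → ℝ) (M : Matrix ι ι ℝ), ‖WithLp.toLp 2 w‖ ≤ L → ‖M‖ ≤ R →
        ∃ V ∈ T, ∀ s, |optimisticValue φ H w M s - V s| ≤ ε) ∧
      (T.card : ℝ) ≤ (1 + 4 * L / ε) ^ Fintype.card ι *
        (1 + 8 * R / ε ^ 2) ^ (Fintype.card ι * Fintype.card ι) := by
  classical
  obtain ⟨Tw, hTw, hTw_card⟩ :=
    exists_finset_dist_le_of_mem_closedBall (0 : EuclideanSpace ℝ ι) hL (half_pos hε)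
  obtain ⟨TM, hTM, hTM_card⟩ :=
    exists_finset_dist_le_of_mem_closedBall (0 : Matrix ι ι ℝ) hR (by positivity : 0 < ε ^ 2 / 4)
  refine ⟨Finset.image₂ (fun u N => optimisticValue φ H (WithLp.ofLp u) N) Tw TM, ?_, ?_⟩
  · intro w M hw hM
    obtain ⟨u, hu, hwu⟩ := hTw (WithLp.toLp 2 w) (mem_closedBall_zero_iff.2 hw)
    obtain ⟨N, hN, hMN⟩ := hTM M (mem_closedBall_zero_iff.2 hM)
    refine ⟨_, Finset.mem_image₂_of_mem hu hN, fun s => ?_⟩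
    calc |optimisticValue φ H w M s - optimisticValue φ H (WithLp.ofLp u) N s|
        ≤ ‖WithLp.toLp 2 (w - WithLp.ofLp u)‖ + √‖M - N‖ :=
          abs_optimisticValue_sub_le hφ H _ _ _ _ s
      _ ≤ ε / 2 + √(ε ^ 2 / 4) := by
        rw [dist_eq_norm] at hwu hMN
        gcongr
        simpa using hwu
      _ = ε := by
        rw [show ε ^ 2 / 4 = (ε / 2) ^ 2 by ring, Real.sqrt_sq (by positivity)]; ring
  · have h4L : 1 + 2 * L / (ε / 2) = 1 + 4 * L / ε := by field_simp; ring
    have h8R : 1 + 2 * R / (ε ^ 2 / 4) = 1 + 8 * R / ε ^ 2 := by field_simp; ring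
    rw [finrank_euclideanSpace, h4L] at hTw_card
    rw [Module.finrank_matrix, Module.finrank_self, mul_one, h8R] at hTM_card
    calc ((Finset.image₂ _ Tw TM).card : ℝ) ≤ Tw.card * TM.card :=
          mod_cast Finset.card_image₂_le _ _ _
      _ ≤ _ := by gcongr

end OptimisticValue

theorem Real.log_natCast_le_log {n : ℕ} {y : ℝ} (hy : 1 ≤ y) (h : (n : ℝ) ≤ y) :
    Real.log n ≤ Real.log y := by
  rcases n.eq_zero_or_pos with rfl | hn
  · simpa using Real.log_nonneg hy
  · exact Real.log_le_log (by positivity) h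

theorem covering_number_optimistic_class_general
    {S A : Type*} [Fintype A] [Nonempty A] (d : ℕ)
    (φ : S → A → Fin d → ℝ)
    (hφ : ∀ s a, Real.sqrt (∑ i, φ s a i ^ 2) ≤ 1)
    (L B lam H ε : ℝ) (hL : 0 < L) (hlam : 0 < lam)
    (hε : 0 < ε) :
    ∃ C : Set (S → ℝ), C.Finite ∧
      (∀ V : S → ℝ,
        (∃ (w : Fin d → ℝ) (M : Matrix (Fin d) (Fin d) ℝ),
          Real.sqrt (∑ i, w i ^ 2) ≤ L ∧
          Real.sqrt (∑ i, ∑ j, M i j ^ 2) ≤ Real.sqrt d * B ^ 2 / lam ∧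
          ∀ s, V s = min
            (Finset.univ.sup' Finset.univ_nonempty
              (fun a : A => w ⬝ᵥ φ s a + Real.sqrt (φ s a ⬝ᵥ M *ᵥ φ s a))) H) →
        ∃ V' ∈ C, ∀ s, |V s - V' s| ≤ ε) ∧
      Real.log (Nat.card C) ≤
        d * Real.log (1 + 4 * L / ε) +
          (d : ℝ) ^ 2 * Real.log (1 + 8 * Real.sqrt d * B ^ 2 / (lam * ε ^ 2)) := by
  simp only [← EuclideanSpace.norm_toLp_eq_sqrt_sum_sq, ← frobenius_norm_eq_sqrt_sum_sq] at hφ ⊢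
  obtain ⟨T, hT, hTcard⟩ := exists_finset_cover_optimisticValue hφ H hL.le
    (by positivity : 0 ≤ Real.sqrt d * B ^ 2 / lam) hε
  refine ⟨T, T.finite_toSet, fun V ⟨w, M, hw, hM, hV⟩ => ?_, ?_⟩
  · obtain ⟨V', hV', hVV'⟩ := hT w M hw hM
    exact ⟨V', hV', fun s => by rw [hV s]; exact hVV' s⟩
  · rw [Nat.card_coe_set_eq, Set.ncard_coe_finset]
    have hR : 8 * (Real.sqrt d * B ^ 2 / lam) / ε ^ 2 =
        8 * Real.sqrt d * B ^ 2 / (lam * ε ^ 2) := by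
      field_simp
    rw [Fintype.card_fin, hR] at hTcard
    have h1 : 1 ≤ 1 + 4 * L / ε := le_add_of_nonneg_right (by positivity)
    have h2 : 1 ≤ 1 + 8 * Real.sqrt d * B ^ 2 / (lam * ε ^ 2) :=
      le_add_of_nonneg_right (by positivity)
    refine (Real.log_natCast_le_log (one_le_mul_of_one_le_of_one_le (one_le_pow₀ h1)
      (one_le_pow₀ h2)) hTcard).trans_eq ?_
    rw [Real.log_mul (by positivity) (by positivity), Real.log_pow, Real.log_pow]
    push_cast
    ring

/-- Covering number of the optimistic value function class: functions of the
form `V(s) = min (max_a (wᵀφ(s,a) + √(φ(s,a)ᵀAφ(s,a)))) H` with `‖w‖ ≤ L` and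
`‖A‖_F ≤ √d B² / λ` admit an `ε`-cover `C` in sup-distance with
`log |C| ≤ d log(1 + 4L/ε) + d² log(1 + 8√d B²/(λ ε²))`. -/
theorem covering_number_optimistic_class
    {S A : Type*} [Fintype A] [Nonempty A] (d : ℕ)
    (φ : S → A → Fin d → ℝ)
    (hφ : ∀ s a, Real.sqrt (∑ i, φ s a i ^ 2) ≤ 1)
    (L B lam H ε : ℝ) (hL : 0 < L) (hB : 0 < B) (hlam : 0 < lam)
    (hH : 0 < H) (hε : 0 < ε) :
    ∃ C : Set (S → ℝ), C.Finite ∧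
      (∀ V : S → ℝ,
        (∃ (w : Fin d → ℝ) (M : Matrix (Fin d) (Fin d) ℝ),
          Real.sqrt (∑ i, w i ^ 2) ≤ L ∧
          Real.sqrt (∑ i, ∑ j, M i j ^ 2) ≤ Real.sqrt d * B ^ 2 / lam ∧
          ∀ s, V s = min
            (Finset.univ.sup' Finset.univ_nonempty
              (fun a : A => w ⬝ᵥ φ s a + Real.sqrt (φ s a ⬝ᵥ M *ᵥ φ s a))) H) →
        ∃ V' ∈ C, ∀ s, |V s - V' s| ≤ ε) ∧
      Real.log (Nat.card C) ≤
        d * Real.log (1 + 4 * L / ε) +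
          (d : ℝ) ^ 2 * Real.log (1 + 8 * Real.sqrt d * B ^ 2 / (lam * ε ^ 2)) :=
  covering_number_optimistic_class_general d φ hφ L B lam H ε hL hlam hε
end
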